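/- arXiv:1008.0292 — 6 statements merged into one kernel-verified Lean document; each statement's English description precedes it below -/
import Mathlib

section
/- Let K be a field of characteristic 0, n ∈ ℕ, W the n-th Weyl algebra over K, w ∈ W, ν ∈ ℕ₀^{2n}, and ω ∈ Ω. Then for all s ∈ ℕ with s > deg^ν(w) − deg^ν(σ^ω(w)) it holds deg^ν(σ^ω(w)) + s·deg^ω(w) = deg^{ν+sω}(w), where deg^ν(σ^ω(w)) is computed in K[X,Y] via the identification ψ^ω. -/
open MvPolynomial

set_option maxHeartbeats 1000000
set_option synthInstance.maxHeartbeats 400000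

namespace WeylPaper

variable (K : Type) [Field K] [CharZero K] (n : ℕ)

/-- `K[X_1,…,X_n]`, the polynomial ring on which the Weyl algebra acts. -/
abbrev PolyN := MvPolynomial (Fin n) K

/-- `K[X,Y] = K[X_1,…,X_n,Y_1,…,Y_n]`, with the `X`-variables indexed by `Sum.inl`
and the `Y`-variables indexed by `Sum.inr`. -/
abbrev KXY := MvPolynomial (Fin n ⊕ Fin n) K

/-- Exponent vectors `(λ,μ) ∈ ℕ₀ⁿ × ℕ₀ⁿ`. -/
abbrev Exps := (Fin n ⊕ Fin n) →₀ ℕ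

/-- The operator `ξ_i : p ↦ X_i · p` on `K[X]`. -/
noncomputable def xiOp (i : Fin n) : Module.End K (PolyN K n) :=
  LinearMap.mulLeft K (X i)

/-- The operator `∂_i = ∂/∂X_i` on `K[X]`. -/
noncomputable def delOp (i : Fin n) : Module.End K (PolyN K n) :=
  (pderiv i).toLinearMap

/-- The `n`-th Weyl algebra over `K`, as the `K`-subalgebra of `End_K K[X]`
generated by `ξ_1,…,ξ_n,∂_1,…,∂_n`. -/
noncomputable def weylAlg : Subalgebra K (Module.End K (PolyN K n)) :=
  Algebra.adjoin K (Set.range (xiOp K n) ∪ Set.range (delOp K n))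

/-- The normal monomial `ξ^λ ∂^μ`, encoded by `γ = (λ,μ) : Exps n`. -/
noncomputable def wmono (γ : Exps n) : Module.End K (PolyN K n) :=
  (List.ofFn fun i : Fin n => xiOp K n i ^ γ (Sum.inl i)).prod *
    (List.ofFn fun i : Fin n => delOp K n i ^ γ (Sum.inr i)).prod

/-- The weight `ω·(λ⃗μ)` of an exponent vector. -/
def wt (ω : Fin n ⊕ Fin n → ℕ) (γ : Exps n) : ℕ :=
  γ.sum fun j k => ω j * k

/-- The natural polynomial region `Ω`: all weight vectors `ω ∈ ℕ₀^{2n}` with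
`ω_i + ω_{n+i} > 0` for all `i`. -/
def inOmega (ω : Fin n ⊕ Fin n → ℕ) : Prop :=
  ∀ i : Fin n, 0 < ω (Sum.inl i) + ω (Sum.inr i)

variable {K n}
variable (b : Module.Basis (Exps n) K (weylAlg K n))

/-- The statement that the normal monomials `ξ^λ∂^μ` are the given `K`-basis of `W`. -/
def IsMonomialBasis : Prop :=
  ∀ γ : Exps n, (↑(b γ) : Module.End K (PolyN K n)) = wmono K n γ

/-- The support of `w ∈ W`: exponents occurring in the canonical form of `w`. -/
noncomputable def wsupp (w : weylAlg K n) : Finset (Exps n) :=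
  (b.repr w).support

/-- The `ω`-degree of `w ∈ W`, an element of `ℤ ∪ {-∞}`. -/
noncomputable def wdeg (ω : Fin n ⊕ Fin n → ℕ) (w : weylAlg K n) : WithBot ℤ :=
  (b.repr w).support.sup fun γ => ((wt n ω γ : ℤ) : WithBot ℤ)

/-- The `ω`-degree filtration `F^ω_i W = {w : deg^ω w ≤ i}` of the Weyl algebra. -/
noncomputable def FW (ω : Fin n ⊕ Fin n → ℕ) (i : ℤ) : Submodule K (weylAlg K n) :=
  Submodule.comap b.repr.toLinearMap
    (Finsupp.supported K K {γ : Exps n | (wt n ω γ : ℤ) ≤ i})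

/-- The `i`-th `ω`-symbol `σ^ω_i(w)`, i.e. the part of (the canonical form of) `w`
of `ω`-weight exactly `i`, regarded as an element of `K[X,Y]` via `ψ^ω`. -/
noncomputable def symbAt (ω : Fin n ⊕ Fin n → ℕ) (i : ℤ) (w : weylAlg K n) : KXY K n :=
  ∑ γ ∈ (b.repr w).support.filter (fun γ => (wt n ω γ : ℤ) = i),
    monomial γ (b.repr w γ)

/-- The `ω`-symbol `σ^ω(w)`: the part of `w` of highest `ω`-weight, regarded as an
element of `K[X,Y]` via `ψ^ω`; `σ^ω(0) = 0`. -/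
noncomputable def symb (ω : Fin n ⊕ Fin n → ℕ) (w : weylAlg K n) : KXY K n :=
  ∑ γ ∈ (b.repr w).support.filter
      (fun γ => ((wt n ω γ : ℤ) : WithBot ℤ) = wdeg b ω w),
    monomial γ (b.repr w γ)

variable (n) in
/-- The `ν`-degree of a polynomial in `K[X,Y]`, an element of `ℤ ∪ {-∞}`. -/
noncomputable def pdeg (ν : Fin n ⊕ Fin n → ℕ) (p : KXY K n) : WithBot ℤ :=
  p.support.sup fun γ => ((wt n ν γ : ℤ) : WithBot ℤ)

variable (n) in
/-- The `ν`-degree filtration `F^ν_i K[X,Y]`. -/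
noncomputable def FP (ν : Fin n ⊕ Fin n → ℕ) (i : ℤ) : Submodule K (KXY K n) where
  carrier := {p | ∀ γ ∈ p.support, (wt n ν γ : ℤ) ≤ i}
  add_mem' := by
    intro p q hp hq γ hγ
    rcases Finset.mem_union.mp (MvPolynomial.support_add hγ) with h | h
    exacts [hp γ h, hq γ h]
  zero_mem' := by simp
  smul_mem' := by
    intro c p hp γ hγ
    exact hp γ (MvPolynomial.support_smul hγ)

variable (n) in
/-- The `i`-th `ν`-symbol `τ^ν_i(p)` of a polynomial: its part of `ν`-weight exactly `i`,
regarded as an element of `K[X,Y]` via the identification `Gr^ν K[X,Y] ≅ K[X,Y]`. -/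
noncomputable def psymbAt (ν : Fin n ⊕ Fin n → ℕ) (i : ℤ) (p : KXY K n) : KXY K n :=
  ∑ γ ∈ p.support.filter (fun γ => (wt n ν γ : ℤ) = i), monomial γ (coeff γ p)

variable (n) in
/-- The `ν`-symbol (leading `ν`-form) `τ^ν(p)` of a polynomial; `τ^ν(0) = 0`. -/
noncomputable def psymb (ν : Fin n ⊕ Fin n → ℕ) (p : KXY K n) : KXY K n :=
  ∑ γ ∈ p.support.filter (fun γ => ((wt n ν γ : ℤ) : WithBot ℤ) = pdeg n ν p),
    monomial γ (coeff γ p)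

/-- The ideal `Gr^ω L` of `K[X,Y]` associated to a left ideal `L` of `W`:
it is generated (indeed spanned) by the `ω`-symbols of the elements of `L`. -/
noncomputable def grW (ω : Fin n ⊕ Fin n → ℕ)
    (L : Submodule (weylAlg K n) (weylAlg K n)) : Ideal (KXY K n) :=
  Ideal.span (symb b ω '' L)

variable (n) in
/-- The ideal `Gr^ν I` of `K[X,Y]` associated to an ideal `I` of `K[X,Y]`:
it is generated (indeed spanned) by the `ν`-symbols of the elements of `I`. -/
noncomputable def grP (ν : Fin n ⊕ Fin n → ℕ) (I : Ideal (KXY K n)) : Ideal (KXY K n) :=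
  Ideal.span (psymb n ν '' I)


/-- A normal ordering (term ordering) on exponent vectors. -/
structure NormalOrdering (n : ℕ) where
  le : Exps n → Exps n → Prop
  refl : ∀ γ, le γ γ
  trans : ∀ {γ δ ε}, le γ δ → le δ ε → le γ ε
  antisymm : ∀ {γ δ}, le γ δ → le δ γ → γ = δ
  total : ∀ γ δ, le γ δ ∨ le δ γ
  bot : ∀ γ, le 0 γ
  compat : ∀ {γ δ} (α), le γ δ → le (γ + α) (δ + α)

theorem wt_zero (ν : Fin n ⊕ Fin n → ℕ) : wt n ν 0 = 0 :=
  Finsupp.sum_zero_index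

theorem wt_add (ν : Fin n ⊕ Fin n → ℕ) (γ δ : Exps n) :
    wt n ν (γ + δ) = wt n ν γ + wt n ν δ :=
  Finsupp.sum_add_index' (fun j => mul_zero (ν j)) (fun j k l => mul_add (ν j) k l)

/-- The normal ordering `≼_ν` induced by a weight `ν` and a normal ordering `≼`:
compare first by `ν`-weight, break ties by `≼`. -/
def NormalOrdering.induced (o : NormalOrdering n) (ν : Fin n ⊕ Fin n → ℕ) :
    NormalOrdering n where
  le γ δ := wt n ν γ < wt n ν δ ∨ (wt n ν γ = wt n ν δ ∧ o.le γ δ)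
  refl γ := Or.inr ⟨rfl, o.refl γ⟩
  trans := by
    rintro γ δ ε (h | ⟨h, h'⟩) (g | ⟨g, g'⟩)
    · exact Or.inl (h.trans g)
    · exact Or.inl (g ▸ h)
    · exact Or.inl (h ▸ g)
    · exact Or.inr ⟨h.trans g, o.trans h' g'⟩
  antisymm := by
    rintro γ δ (h | ⟨h, h'⟩) (g | ⟨g, g'⟩)
    · omega
    · omega
    · omega
    · exact o.antisymm h' g'
  total := by
    intro γ δ
    rcases Nat.lt_trichotomy (wt n ν γ) (wt n ν δ) with h | h | h
    · exact Or.inl (Or.inl h)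
    · rcases o.total γ δ with h' | h'
      · exact Or.inl (Or.inr ⟨h, h'⟩)
      · exact Or.inr (Or.inr ⟨h.symm, h'⟩)
    · exact Or.inr (Or.inl h)
  bot := by
    intro γ
    rcases Nat.eq_zero_or_pos (wt n ν γ) with h | h
    · exact Or.inr ⟨by rw [wt_zero, h], o.bot γ⟩
    · exact Or.inl (by rw [wt_zero]; exact h)
  compat := by
    rintro γ δ α (h | ⟨h, h'⟩)
    · exact Or.inl (by rw [wt_add, wt_add]; omega)
    · exact Or.inr ⟨by rw [wt_add, wt_add, h], o.compat α h'⟩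

variable (b : Module.Basis (Exps n) K (weylAlg K n))

/-- `γ` is the `≼`-leading exponent of `w ∈ W`. -/
def IsLeadExpW (o : NormalOrdering n) (w : weylAlg K n) (γ : Exps n) : Prop :=
  γ ∈ (b.repr w).support ∧ ∀ δ ∈ (b.repr w).support, o.le δ γ

/-- The leading term ideal `LT_≼(S) ⊆ K[X,Y]` of a set `S ⊆ W`. -/
noncomputable def ltIdealW (o : NormalOrdering n) (S : Set (weylAlg K n)) :
    Ideal (KXY K n) :=
  Ideal.span {q | ∃ w ∈ S, w ≠ 0 ∧ ∃ γ, IsLeadExpW b o w γ ∧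
    q = MvPolynomial.monomial γ (1 : K)}

variable (n) in
/-- `γ` is the `≼`-leading exponent of a polynomial `p ∈ K[X,Y]`. -/
def IsLeadExpP (o : NormalOrdering n) (p : KXY K n) (γ : Exps n) : Prop :=
  γ ∈ p.support ∧ ∀ δ ∈ p.support, o.le δ γ

variable (n) in
/-- The leading term ideal `LT_≼(S) ⊆ K[X,Y]` of a set `S ⊆ K[X,Y]`. -/
noncomputable def ltIdealP (o : NormalOrdering n) (S : Set (KXY K n)) :
    Ideal (KXY K n) :=
  Ideal.span {q | ∃ p ∈ S, p ≠ 0 ∧ ∃ γ, IsLeadExpP n o p γ ∧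
    q = MvPolynomial.monomial γ (1 : K)}

/-- `B` is a `≼`-Gröbner basis of the left ideal `L ⊆ W`. -/
def IsGroebnerW (o : NormalOrdering n) (L : Submodule (weylAlg K n) (weylAlg K n))
    (B : Finset (weylAlg K n)) : Prop :=
  (B : Set (weylAlg K n)) ⊆ L ∧
    Submodule.span (weylAlg K n) (B : Set (weylAlg K n)) = L ∧
    ltIdealW b o L = ltIdealW b o B

/-- `U` is a universal Gröbner basis of the left ideal `L ⊆ W`. -/
def IsUnivGroebnerW (L : Submodule (weylAlg K n) (weylAlg K n))
    (U : Finset (weylAlg K n)) : Prop :=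
  ∀ o : NormalOrdering n, IsGroebnerW b o L U

variable (n) in
/-- `B` is a `≼`-Gröbner basis of the ideal `I ⊆ K[X,Y]`. -/
def IsGroebnerP (o : NormalOrdering n) (I : Ideal (KXY K n))
    (B : Finset (KXY K n)) : Prop :=
  (B : Set (KXY K n)) ⊆ I ∧
    Ideal.span (B : Set (KXY K n)) = I ∧
    ltIdealP n o (I : Set (KXY K n)) = ltIdealP n o B

section Modules

variable {M : Type} [AddCommGroup M] [Module (weylAlg K n) M]

/-- `FM` is a good `F^ω W`-filtration of the left `W`-module `M`. -/
def IsGoodFiltrationW (ω : Fin n ⊕ Fin n → ℕ) (FM : ℤ → AddSubgroup M) : Prop :=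
  (∀ m : M, ∃ i, m ∈ FM i) ∧
  ∃ (t : ℕ) (g : Fin t → M) (p : Fin t → ℤ), ∀ i : ℤ,
    FM i = ⨆ j : Fin t, ((FW b ω (i - p j)).toAddSubgroup (M := weylAlg K n)).map
      ((smulAddHom (weylAlg K n) M).flip (g j))

/-- A realization of the associated graded module `Gr^ω M` of `(M, F^ω M)` as a
`K[X,Y]`-module `G` (via the identification `ψ^ω : K[X,Y] ≅ Gr^ω W`):
`emb i` sends `x ∈ F^ω_i M` to its symbol `σ_i(x) ∈ Gr^ω_i M ⊆ G`. -/
structure GrRealW (ω : Fin n ⊕ Fin n → ℕ) (FM : ℤ → AddSubgroup M)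
    (G : ModuleCat (KXY K n)) where
  emb : ∀ i : ℤ, FM i →+ G
  emb_eq_zero_iff : ∀ (i : ℤ) (x : FM i), emb i x = 0 ↔ (x : M) ∈ FM (i - 1)
  emb_smul : ∀ (i j : ℤ) (w : weylAlg K n), w ∈ FW b ω i → ∀ (m : M) (hm : m ∈ FM j)
      (hm' : w • m ∈ FM (i + j)),
      symbAt b ω i w • emb j ⟨m, hm⟩ = emb (i + j) ⟨w • m, hm'⟩
  internal : DirectSum.IsInternal fun i : ℤ => (emb i).range

end Modules

section PolyModules

variable {G : Type} [AddCommGroup G] [Module (KXY K n) G]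

variable (n) in
/-- `FG` is a good `F^ν K[X,Y]`-filtration of the `K[X,Y]`-module `G`. -/
def IsGoodFiltrationP (ν : Fin n ⊕ Fin n → ℕ) (FG : ℤ → AddSubgroup G) : Prop :=
  (∀ x : G, ∃ i, x ∈ FG i) ∧
  ∃ (t : ℕ) (g : Fin t → G) (p : Fin t → ℤ), ∀ i : ℤ,
    FG i = ⨆ j : Fin t, ((FP n ν (i - p j)).toAddSubgroup).map
      ((smulAddHom (KXY K n) G).flip (g j))

variable (n) in
/-- A realization of the associated graded module `Gr^ν G` of a filtered
`K[X,Y]`-module `(G, F^ν G)` as a `K[X,Y]`-module `H`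
(via the identification `Gr^ν K[X,Y] ≅ K[X,Y]`). -/
structure GrRealP (ν : Fin n ⊕ Fin n → ℕ) (FG : ℤ → AddSubgroup G)
    (H : ModuleCat (KXY K n)) where
  emb : ∀ i : ℤ, FG i →+ H
  emb_eq_zero_iff : ∀ (i : ℤ) (x : FG i), emb i x = 0 ↔ (x : G) ∈ FG (i - 1)
  emb_smul : ∀ (i j : ℤ) (q : KXY K n), q ∈ FP n ν i → ∀ (x : G) (hx : x ∈ FG j)
      (hx' : q • x ∈ FG (i + j)),
      psymbAt n ν i q • emb j ⟨x, hx⟩ = emb (i + j) ⟨q • x, hx'⟩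
  internal : DirectSum.IsInternal fun i : ℤ => (emb i).range

end PolyModules

/-- A realization of the associated graded ring `Gr^ω W` as a `K`-algebra `A`:
`emb i` sends `w ∈ F^ω_i W` to its symbol `σ^ω_i(w) ∈ Gr^ω_i W ⊆ A`. -/
structure GrRingRealW (ω : Fin n ⊕ Fin n → ℕ) (A : Type) [Ring A] [Algebra K A] where
  emb : ∀ i : ℤ, FW b ω i →ₗ[K] A
  emb_eq_zero_iff : ∀ (i : ℤ) (x : FW b ω i),
    emb i x = 0 ↔ (x : weylAlg K n) ∈ FW b ω (i - 1)
  emb_mul : ∀ (i j : ℤ) (x : FW b ω i) (y : FW b ω j)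
      (h : (x : weylAlg K n) * (y : weylAlg K n) ∈ FW b ω (i + j)),
      emb i x * emb j y = emb (i + j) ⟨(x : weylAlg K n) * y, h⟩
  emb_one : ∀ h : (1 : weylAlg K n) ∈ FW b ω 0, emb 0 ⟨1, h⟩ = 1
  internal : DirectSum.IsInternal fun i : ℤ => LinearMap.range (emb i)

end WeylPaper

/-! Let `D` be the top `ω`-weight on the support of `w` and `E` the top `ν`-weight among the
exponents of `ω`-weight `D`; these exponents make up the support of `σ^ω(w)`. Such an exponent
has `(ν + sω)`-weight at most `E + sD`, with equality for one of them. Any other exponent loses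
at least `s` in the `sω`-part, while by hypothesis its `ν`-weight is below `s + E`, so its
`(ν + sω)`-weight stays below `E + sD` as well. -/

namespace Finset

variable {α : Type*}

theorem sup'_add_mul_eq_of_lt {S : Finset α} (hS : S.Nonempty) (f g : α → ℤ) (s : ℤ)
    (hT : (S.filter fun a => f a = S.sup' hS f).Nonempty)
    (h : S.sup' hS g < s + (S.filter fun a => f a = S.sup' hS f).sup' hT g) :
    S.sup' hS (fun a => g a + s * f a) =
      (S.filter fun a => f a = S.sup' hS f).sup' hT g + s * S.sup' hS f := by
  set D := S.sup' hS f
  set T := S.filter fun a => f a = D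
  set E := T.sup' hT g
  have hs : 0 < s := by linarith [sup'_mono g (filter_subset _ S) hT]
  apply le_antisymm
  · refine sup'_le _ _ fun a ha => ?_
    have hga : g a < s + E := (le_sup' g ha).trans_lt h
    rcases (le_sup' f ha).eq_or_lt with hfa | hfa
    · have : g a ≤ E := le_sup' g (mem_filter.2 ⟨ha, hfa⟩)
      rw [hfa]
      linarith
    · have : f a + 1 ≤ D := hfa
      nlinarith
  · obtain ⟨a, ha, hEa⟩ := exists_mem_eq_sup' hT g
    obtain ⟨haS, hfa⟩ := mem_filter.1 ha
    calc E + s * D = g a + s * f a := by rw [← hEa, hfa]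
      _ ≤ _ := le_sup' (fun a => g a + s * f a) haS

theorem sup_add_nsmul_sup_eq_of_lt (S : Finset α) (f g : α → ℤ) (s : ℕ)
    (h : S = ∅ ∨ S.sup (fun a => (g a : WithBot ℤ)) < ((s : ℤ) : WithBot ℤ) +
      (S.filter fun a => (f a : WithBot ℤ) = S.sup fun a => (f a : WithBot ℤ)).sup
        fun a => (g a : WithBot ℤ)) :
    (S.filter fun a => (f a : WithBot ℤ) = S.sup fun a => (f a : WithBot ℤ)).sup
        (fun a => (g a : WithBot ℤ)) + s • S.sup (fun a => (f a : WithBot ℤ)) =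
      S.sup fun a => ((g a + s * f a : ℤ) : WithBot ℤ) := by
  rcases S.eq_empty_or_nonempty with rfl | hS
  · simp
  have hcoe {U : Finset α} (hU : U.Nonempty) (k : α → ℤ) :
      U.sup (fun a => (k a : WithBot ℤ)) = ↑(U.sup' hU k) :=
    (coe_sup' hU k).symm
  have hfilter : (S.filter fun a => (f a : WithBot ℤ) = ↑(S.sup' hS f)) =
      S.filter fun a => f a = S.sup' hS f := by
    simp only [WithBot.coe_inj]
  rw [hcoe hS f, hfilter] at h ⊢
  obtain ⟨a, ha, hfa⟩ := exists_mem_eq_sup' hS f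
  have hT : (S.filter fun a => f a = S.sup' hS f).Nonempty := ⟨a, mem_filter.2 ⟨ha, hfa.symm⟩⟩
  rw [hcoe hT g, hcoe hS g, ← WithBot.coe_add, WithBot.coe_lt_coe] at h
  rw [hcoe hT g, hcoe hS fun a => g a + s * f a, ← WithBot.coe_nsmul,
    ← WithBot.coe_add, WithBot.coe_inj, nsmul_eq_mul,
    sup'_add_mul_eq_of_lt hS f g s hT (h.resolve_left hS.ne_empty)]

end Finset

namespace WeylPaper

variable {K : Type} [Field K] {n : ℕ}

theorem wt_add_mul (ν ω : Fin n ⊕ Fin n → ℕ) (s : ℕ) (γ : Exps n) :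
    wt n (fun j => ν j + s * ω j) γ = wt n ν γ + s * wt n ω γ := by
  simp [wt, Finsupp.sum, add_mul, Finset.sum_add_distrib, Finset.mul_sum, mul_assoc]

theorem support_symb (b : Module.Basis (Exps n) K (weylAlg K n)) (ω : Fin n ⊕ Fin n → ℕ)
    (w : weylAlg K n) :
    (symb b ω w).support = (b.repr w).support.filter
      fun γ => ((wt n ω γ : ℤ) : WithBot ℤ) = wdeg b ω w := by
  ext δ
  simp +contextual [symb, coeff_sum, coeff_monomial]

end WeylPaper

open WeylPaper MvPolynomial in
theorem statement_4_general (n : ℕ) (K : Type) [Field K]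
    (b : Module.Basis (Exps n) K (weylAlg K n))
    (w : weylAlg K n) (ν : Fin n ⊕ Fin n → ℕ) (ω : Fin n ⊕ Fin n → ℕ) :
    ∀ s : ℕ, 0 < s →
      (w = 0 ∨ wdeg b ν w < ((s : ℤ) : WithBot ℤ) + pdeg n ν (symb b ω w)) →
      pdeg n ν (symb b ω w) + s • wdeg b ω w = wdeg b (fun j => ν j + s * ω j) w := by
  intro s _ hyp
  have hwdeg : wdeg b (fun j => ν j + s * ω j) w = (b.repr w).support.sup
      fun γ => ((wt n ν γ + s * wt n ω γ : ℤ) : WithBot ℤ) := by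
    simp only [wdeg, wt_add_mul, Nat.cast_add, Nat.cast_mul]
  rw [pdeg, support_symb] at hyp ⊢
  rw [hwdeg]
  exact Finset.sup_add_nsmul_sup_eq_of_lt _ _ _ _ (hyp.imp_left fun hw => by simp [hw])

open WeylPaper MvPolynomial in
/-- for all `s ∈ ℕ` with `s > deg^ν(w) - deg^ν(σ^ω(w))` one has
`deg^ν(σ^ω(w)) + s·deg^ω(w) = deg^{ν+sω}(w)` (in `ℤ ∪ {-∞}`; for `w = 0` both sides
are `-∞` and the claim holds for every `s`). -/
theorem statement_4 (n : ℕ) (hn : 0 < n) (K : Type) [Field K] [CharZero K]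
    (b : Module.Basis (Exps n) K (weylAlg K n)) (hb : IsMonomialBasis b)
    (w : weylAlg K n) (ν : Fin n ⊕ Fin n → ℕ) (ω : Fin n ⊕ Fin n → ℕ) (hω : inOmega n ω) :
    ∀ s : ℕ, 0 < s →
      (w = 0 ∨ wdeg b ν w < ((s : ℤ) : WithBot ℤ) + pdeg n ν (symb b ω w)) →
      pdeg n ν (symb b ω w) + s • wdeg b ω w = wdeg b (fun j => ν j + s * ω j) w :=
  statement_4_general n K b w ν ω
end

section
/- Let R be a commutative ring with a filtration 𝓡, let M be an R-module and N an R-submodule of M. Provide the annihilator ideals (0:M), (0:N), and (0:M/N) of R with the filtrations induced by 𝓡, denoted (0:𝓜), (0:𝓝), (0:𝓜/𝓝). Then √(Gr(0:𝓜)) = √(Gr(0:𝓝)) ∩ √(Gr(0:𝓜/𝓝)) as ideals of the ring Gr𝓡. -/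
/-!
Since `(0:M)` lies in both `(0:N)` and `(0:M/N)`, and `(0:N)·(0:M/N) ⊆ (0:M)`, the same
two relations pass to the graded ideals: `Gr` is monotone, and the product of two symbols
is the symbol of the product. Hence `Gr(0:N)·Gr(0:M/N) ⊆ Gr(0:M) ⊆ Gr(0:N) ∩ Gr(0:M/N)`,
and taking radicals (`√(IJ) = √I ∩ √J`) gives the equality.
-/

namespace FilteredPaper

variable {R : Type} [Ring R]

/-- `F` is a filtration of the ring `R`. -/
structure IsRingFiltration (F : ℤ → AddSubgroup R) : Prop where
  exhaustive : ∀ r : R, ∃ i, r ∈ F i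
  mono : ∀ i : ℤ, F (i - 1) ≤ F i
  mul_mem : ∀ {i j : ℤ} {r s : R}, r ∈ F i → s ∈ F j → r * s ∈ F (i + j)
  bot : ∀ i < 0, F i = ⊥
  one_mem : (1 : R) ∈ F 0

/-- `FM` is an `F`-filtration of the left `R`-module `M`. -/
structure IsModuleFiltration (F : ℤ → AddSubgroup R) {M : Type} [AddCommGroup M]
    [Module R M] (FM : ℤ → AddSubgroup M) : Prop where
  exhaustive : ∀ m : M, ∃ i, m ∈ FM i
  mono : ∀ i : ℤ, FM (i - 1) ≤ FM i
  smul_mem : ∀ {i j : ℤ} {r : R} {m : M}, r ∈ F i → m ∈ FM j → r • m ∈ FM (i + j)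

/-- A realization of the associated graded ring `Gr𝓡 = ⊕ᵢ Fᵢ/Fᵢ₋₁` of the filtered ring
`(R,F)` as a ring `A`: the map `emb i` sends `x ∈ Fᵢ` to its symbol
`σᵢ(x) = x + Fᵢ₋₁ ∈ Grᵢ𝓡 ⊆ A`; it is additive with kernel `Fᵢ₋₁`, the symbol maps are
multiplicative, and `A` is the internal direct sum of the images. -/
structure GrRingReal (F : ℤ → AddSubgroup R) (A : Type) [Ring A] where
  emb : ∀ i : ℤ, F i →+ A
  emb_eq_zero_iff : ∀ (i : ℤ) (x : F i), emb i x = 0 ↔ (x : R) ∈ F (i - 1)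
  emb_mul : ∀ (i j : ℤ) (x : F i) (y : F j) (h : (x : R) * (y : R) ∈ F (i + j)),
      emb i x * emb j y = emb (i + j) ⟨(x : R) * y, h⟩
  emb_one : ∀ h : (1 : R) ∈ F 0, emb 0 ⟨1, h⟩ = 1
  internal : DirectSum.IsInternal fun i : ℤ => (emb i).range

/-- A realization of the associated graded module `Gr𝓜 = ⊕ᵢ FMᵢ/FMᵢ₋₁` of a filtered
left `R`-module `(M,FM)` as a left module `G` over (a realization `A` of) `Gr𝓡`. -/
structure GrModuleReal (F : ℤ → AddSubgroup R) {M : Type} [AddCommGroup M] [Module R M]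
    (FM : ℤ → AddSubgroup M) {A : Type} [Ring A] (re : GrRingReal F A)
    (G : Type) [AddCommGroup G] [Module A G] where
  emb : ∀ i : ℤ, FM i →+ G
  emb_eq_zero_iff : ∀ (i : ℤ) (x : FM i), emb i x = 0 ↔ (x : M) ∈ FM (i - 1)
  emb_smul : ∀ (i j : ℤ) (r : F i) (m : FM j) (h : (r : R) • (m : M) ∈ FM (i + j)),
      re.emb i r • emb j m = emb (i + j) ⟨(r : R) • (m : M), h⟩
  internal : DirectSum.IsInternal fun i : ℤ => (emb i).range

/-- The ideal `Gr𝓢` of (the realization `A` of) `Gr𝓡` determined by a subset `S ⊆ R`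
carrying the induced filtration `Fᵢ ∩ S`: it is generated (indeed spanned) by the
symbols of the elements of `S`. -/
def grIdealOf {F : ℤ → AddSubgroup R} {A : Type} [Ring A] (re : GrRingReal F A)
    (S : Set R) : Ideal A :=
  Ideal.span {a : A | ∃ (i : ℤ) (x : F i), (x : R) ∈ S ∧ re.emb i x = a}

/-- The induced filtration on the quotient module `M ⧸ N`. -/
def quotFil {M : Type} [AddCommGroup M] [Module R M] (FM : ℤ → AddSubgroup M)
    (N : Submodule R M) : ℤ → AddSubgroup (M ⧸ N) :=
  fun i => (FM i).map N.mkQ.toAddMonoidHom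

/-- `FM` is a good `F`-filtration of the left `R`-module `M`:
`FMᵢ = Σⱼ F_{i-pⱼ} · gⱼ` for finitely many `gⱼ ∈ M`, `pⱼ ∈ ℤ`. -/
def IsGoodFiltration (F : ℤ → AddSubgroup R) {M : Type} [AddCommGroup M] [Module R M]
    (FM : ℤ → AddSubgroup M) : Prop :=
  IsModuleFiltration F FM ∧
  ∃ (t : ℕ) (g : Fin t → M) (p : Fin t → ℤ), ∀ i : ℤ,
    FM i = ⨆ j : Fin t, (F (i - p j)).map ((smulAddHom R M).flip (g j))

/-- The filtration induced by `FM` on a submodule `N ≤ M` is good (with the generators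
`gⱼ` lying in `N`, the equality being read inside `M`). -/
def InducedGoodOn (F : ℤ → AddSubgroup R) {M : Type} [AddCommGroup M] [Module R M]
    (FM : ℤ → AddSubgroup M) (N : Submodule R M) : Prop :=
  ∃ (t : ℕ) (g : Fin t → M) (p : Fin t → ℤ), (∀ j, g j ∈ N) ∧
    ∀ i : ℤ, FM i ⊓ N.toAddSubgroup =
      ⨆ j : Fin t, (F (i - p j)).map ((smulAddHom R M).flip (g j))

end FilteredPaper

namespace FilteredPaper

theorem mul_mem_annihilator_of_mem_annihilator_quotient {R M : Type*} [Ring R]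
    [AddCommGroup M] [Module R M] {N : Submodule R M} {r s : R}
    (hr : r ∈ Module.annihilator R N) (hs : s ∈ Module.annihilator R (M ⧸ N)) :
    r * s ∈ Module.annihilator R M := by
  rw [Module.mem_annihilator] at hr hs ⊢
  intro m
  have hsm : s • m ∈ N := by
    rw [← Submodule.Quotient.mk_eq_zero, Submodule.Quotient.mk_smul]
    exact hs _
  rw [mul_smul]
  exact congrArg Subtype.val (hr ⟨s • m, hsm⟩)

variable {R : Type} [Ring R] {F : ℤ → AddSubgroup R} {A : Type}

theorem grIdealOf_mono [Ring A] (re : GrRingReal F A) {S T : Set R} (hST : S ⊆ T) :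
    grIdealOf re S ≤ grIdealOf re T :=
  Ideal.span_mono fun _ ⟨i, x, hx, hxa⟩ => ⟨i, x, hST hx, hxa⟩

theorem grIdealOf_mul_le [CommRing A] (hF : IsRingFiltration F) (re : GrRingReal F A)
    {S T U : Set R} (hSTU : ∀ r ∈ S, ∀ s ∈ T, r * s ∈ U) :
    grIdealOf re S * grIdealOf re T ≤ grIdealOf re U := by
  rw [grIdealOf, grIdealOf, Ideal.span_mul_span, Ideal.span_le]
  rintro _ ⟨_, ⟨i, x, hx, rfl⟩, _, ⟨j, y, hy, rfl⟩, rfl⟩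
  have hxy : (x : R) * y ∈ F (i + j) := hF.mul_mem x.2 y.2
  change re.emb i x * re.emb j y ∈ _
  rw [re.emb_mul i j x y hxy]
  exact Ideal.subset_span ⟨i + j, ⟨_, hxy⟩, hSTU _ hx _ hy, rfl⟩

end FilteredPaper

open FilteredPaper in
/-- for a filtered commutative ring `(R,𝓡)`, a module `M` and a submodule
`N ≤ M`, with the annihilators carrying the induced filtrations,
`√(Gr(0:𝓜)) = √(Gr(0:𝓝)) ∩ √(Gr(0:𝓜/𝓝))` as ideals of `Gr𝓡` (given by any
realization `A`). -/
theorem statement_8 (R : Type) [CommRing R] (F : ℤ → AddSubgroup R)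
    (hF : IsRingFiltration F)
    (M : Type) [AddCommGroup M] [Module R M] (N : Submodule R M)
    (A : Type) [CommRing A] (re : GrRingReal F A) :
    (grIdealOf re (Module.annihilator R M : Set R)).radical =
      (grIdealOf re (Module.annihilator R ↥N : Set R)).radical ⊓
        (grIdealOf re (Module.annihilator R (M ⧸ N) : Set R)).radical := by
  have hN : Module.annihilator R M ≤ Module.annihilator R N :=
    N.subtype.annihilator_le_of_injective N.injective_subtype
  have hQ : Module.annihilator R M ≤ Module.annihilator R (M ⧸ N) :=
    N.mkQ.annihilator_le_of_surjective N.mkQ_surjective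
  refine le_antisymm ?_ ?_
  · exact le_inf (Ideal.radical_mono (grIdealOf_mono re hN))
      (Ideal.radical_mono (grIdealOf_mono re hQ))
  · rw [← Ideal.radical_mul]
    exact Ideal.radical_mono <| grIdealOf_mul_le hF re fun _ hr _ hs =>
      mul_mem_annihilator_of_mem_annihilator_quotient hr hs
end

section
/- Let R be a commutative ring and 𝓡 a filtration of R such that the filtrations induced by 𝓡 on all submodules and quotient modules of R are good. Let M be a finitely generated R-module and 𝓜 an 𝓡-filtration of M such that the filtrations induced by 𝓜 on all submodules and quotient modules of M are good. Provide the annihilator (0:M) of M in R with its induced 𝓡-filtration, denoted (0:𝓜). Then √(Gr(0:𝓜)) = √(0 : Gr𝓜) as ideals of the commutative ring Gr𝓡. -/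
/-!
A homogeneous element `σ_d(x)` of `Gr𝓡` kills `Gr𝓜` exactly when `x` lowers the filtration
of `M` by one, and `(0 : Gr𝓜)` is spanned by its homogeneous components because `Gr𝓜` is
graded. If `x` lowers the filtration by one, `xⁿ` lowers it by `n`; as the filtration induced on
each cyclic submodule `R gₗ` is good, for large `n` we get `xⁿ gₗ = yₗ gₗ` with `yₗ` of degree
`nd - 1`. For generators `g₁, …, g_t` of `M`, the product `z = ∏ₗ (xⁿ - yₗ)` annihilates `M`
and has the same symbol as `x^{nt}` in degree `ntd`, so `σ_d(x)^{nt} ∈ Gr(0:𝓜)`.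
The inclusion `Gr(0:𝓜) ⊆ (0 : Gr𝓜)` is immediate.
-/

section DirectSum

variable {ι G : Type} [AddCommGroup G] {H : ι → AddSubgroup G}

theorem iSupIndep.addSubgroup_eq_zero_of_sum_eq_zero (hH : iSupIndep H) {s : Finset ι}
    {v : ι → G} (hv : ∀ i ∈ s, v i ∈ H i) (hsum : ∑ i ∈ s, v i = 0) : ∀ i ∈ s, v i = 0 :=
  (iSupIndep_iff_finsetSum_eq_zero_imp_eq_zero _).mp
    (hH.map_orderIso AddSubgroup.toIntSubmodule) s v hv hsum

theorem DirectSum.IsInternal.exists_finsetSum_eq [DecidableEq ι]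
    (hH : DirectSum.IsInternal H) (a : G) :
    ∃ (s : Finset ι) (f : ι → G), (∀ i, f i ∈ H i) ∧ a = ∑ i ∈ s, f i := by
  classical
  obtain ⟨w, rfl⟩ := hH.surjective a
  refine ⟨w.support, fun i => w i, fun i => (w i).2, ?_⟩
  conv_lhs => rw [← DirectSum.sum_support_of w]
  simp [DirectSum.coeAddMonoidHom_of]

end DirectSum

namespace FilteredPaper

section Ring

variable {R : Type} [Ring R] {F : ℤ → AddSubgroup R}

theorem IsRingFiltration.monotone (hF : IsRingFiltration F) : Monotone F :=
  monotone_int_of_le_succ fun n => by simpa using hF.mono (n + 1)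

theorem IsRingFiltration.pow_mem (hF : IsRingFiltration F) {r : R} {i : ℤ} (hr : r ∈ F i) :
    ∀ k : ℕ, r ^ k ∈ F (k * i)
  | 0 => by simpa using hF.one_mem
  | k + 1 => by
    rw [pow_succ, Nat.cast_succ, add_one_mul]
    exact hF.mul_mem (hF.pow_mem hr k) hr

theorem pow_smul_mem_of_forall_smul_mem {M : Type} [AddCommGroup M] [Module R M]
    {FM : ℤ → AddSubgroup M} {x : R} {a : ℤ} (hx : ∀ j, ∀ m ∈ FM j, x • m ∈ FM (j + a))
    (k : ℕ) {j : ℤ} {m : M} (hm : m ∈ FM j) : x ^ k • m ∈ FM (j + k * a) := by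
  induction k with
  | zero => simpa using hm
  | succ k ih =>
    rw [pow_succ', mul_smul, Nat.cast_succ, add_one_mul, ← add_assoc]
    exact hx _ _ ih

theorem InducedGoodOn.exists_bound_span_singleton (hF : IsRingFiltration F) {M : Type}
    [AddCommGroup M] [Module R M] {FM : ℤ → AddSubgroup M} {m₀ : M}
    (hgood : InducedGoodOn F FM (R ∙ m₀)) :
    ∃ c : ℤ, ∀ j, ∀ m ∈ FM j, m ∈ R ∙ m₀ → ∃ y ∈ F (j + c), y • m₀ = m := by
  obtain ⟨t, g, p, hg, heq⟩ := hgood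
  choose r hr using fun l => Submodule.mem_span_singleton.mp (hg l)
  choose s hs using fun l => hF.exhaustive (r l)
  obtain ⟨c, hc⟩ := Finite.exists_le fun l => s l - p l
  refine ⟨c, fun j m hm hm₀ => ?_⟩
  have hmsup : m ∈ ⨆ l, (F (j - p l)).map ((smulAddHom R M).flip (g l)) := by
    rw [← heq j]
    exact ⟨hm, hm₀⟩
  refine AddSubgroup.iSup_induction (C := fun m => ∃ y ∈ F (j + c), y • m₀ = m) _ hmsup
    (fun l m hm => ?_) ⟨0, zero_mem _, zero_smul _ _⟩
    fun m m' ⟨y, hy, hym⟩ ⟨y', hy', hym'⟩ =>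
      ⟨y + y', add_mem hy hy', by rw [add_smul, hym, hym']⟩
  obtain ⟨f, hf, rfl⟩ := hm
  refine ⟨f * r l, hF.monotone ?_ (hF.mul_mem hf (hs l)), ?_⟩
  · linarith [hc l]
  · simp [mul_smul, hr l]

namespace GrRingReal

variable {A : Type} [Ring A] (re : GrRingReal F A)

open Classical in
/-- The symbol `σᵢ(r) = r + Fᵢ₋₁`, with the junk value `0` when `r ∉ Fᵢ`. -/
noncomputable def symbol (i : ℤ) (r : R) : A :=
  if h : r ∈ F i then re.emb i ⟨r, h⟩ else 0

theorem symbol_coe {i : ℤ} (x : F i) : re.symbol i x = re.emb i x :=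
  dif_pos x.2

theorem symbol_mem_grIdealOf {S : Set R} {r : R} (hr : r ∈ S) (i : ℤ) :
    re.symbol i r ∈ grIdealOf re S := by
  unfold symbol
  split_ifs with h
  · exact Ideal.subset_span ⟨i, ⟨r, h⟩, hr, rfl⟩
  · exact zero_mem _

theorem symbol_mul (hF : IsRingFiltration F) {i j : ℤ} {r s : R} (hr : r ∈ F i)
    (hs : s ∈ F j) : re.symbol (i + j) (r * s) = re.symbol i r * re.symbol j s := by
  rw [symbol, dif_pos (hF.mul_mem hr hs), symbol, dif_pos hr, symbol, dif_pos hs,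
    re.emb_mul]

theorem symbol_one (hF : IsRingFiltration F) : re.symbol 0 (1 : R) = 1 := by
  rw [symbol, dif_pos hF.one_mem, re.emb_one]

theorem symbol_pow (hF : IsRingFiltration F) {i : ℤ} {r : R} (hr : r ∈ F i) (k : ℕ) :
    re.symbol (k * i) (r ^ k) = re.symbol i r ^ k := by
  induction k with
  | zero => simpa using re.symbol_one hF
  | succ k ih =>
    rw [Nat.cast_succ, add_one_mul, pow_succ, re.symbol_mul hF (hF.pow_mem hr k) hr, ih,
      pow_succ]

theorem symbol_sub_of_mem_pred (hF : IsRingFiltration F) {i : ℤ} {r s : R} (hr : r ∈ F i)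
    (hs : s ∈ F (i - 1)) : re.symbol i (r - s) = re.symbol i r := by
  have hs' : s ∈ F i := hF.monotone (by omega) hs
  have hsym : re.emb i ⟨s, hs'⟩ = 0 := (re.emb_eq_zero_iff _ _).mpr hs
  rw [symbol, dif_pos (sub_mem hr hs'), symbol, dif_pos hr,
    show (⟨r - s, _⟩ : F i) = ⟨r, hr⟩ - ⟨s, hs'⟩ from rfl, map_sub, hsym, sub_zero]

end GrRingReal

namespace GrModuleReal

variable {M : Type} [AddCommGroup M] [Module R M] {FM : ℤ → AddSubgroup M}
  {A : Type} [Ring A] {re : GrRingReal F A} {G : Type} [AddCommGroup G] [Module A G]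

theorem mem_annihilator_of_forall_emb (reM : GrModuleReal F FM re G) {a : A}
    (ha : ∀ j (m : FM j), a • reM.emb j m = 0) : a ∈ Module.annihilator A G := by
  refine Module.mem_annihilator.mpr fun g => ?_
  obtain ⟨s, f, hf, rfl⟩ := reM.internal.exists_finsetSum_eq g
  rw [Finset.smul_sum]
  refine Finset.sum_eq_zero fun j _ => ?_
  obtain ⟨m, hm⟩ := hf j
  rw [← hm, ha]

theorem smul_mem_pred_of_sum_mem_annihilator (reM : GrModuleReal F FM re G)
    (hFM : IsModuleFiltration F FM) {s : Finset ℤ} {x : ∀ i, F i}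
    (ha : ∑ i ∈ s, re.emb i (x i) ∈ Module.annihilator A G) {i : ℤ}
    (hi : i ∈ s) {j : ℤ} {m : M} (hm : m ∈ FM j) : (x i : R) • m ∈ FM (i + j - 1) := by
  have hsmul : ∀ k, re.emb k (x k) • reM.emb j ⟨m, hm⟩ =
      reM.emb (k + j) ⟨(x k : R) • m, hFM.smul_mem (x k).2 hm⟩ :=
    fun k => reM.emb_smul _ _ _ _ _
  have hsum : ∑ k ∈ s, re.emb k (x k) • reM.emb j ⟨m, hm⟩ = 0 := by
    rw [← Finset.sum_smul]
    exact Module.mem_annihilator.mp ha _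
  have hcomp := (reM.internal.addSubgroup_iSupIndep.comp (add_left_injective j))
    |>.addSubgroup_eq_zero_of_sum_eq_zero (fun k _ => ⟨_, (hsmul k).symm⟩) hsum i hi
  rw [hsmul] at hcomp
  exact (reM.emb_eq_zero_iff _ _).mp hcomp

theorem grIdealOf_annihilator_le (reM : GrModuleReal F FM re G)
    (hFM : IsModuleFiltration F FM) :
    grIdealOf re (Module.annihilator R M : Set R) ≤ Module.annihilator A G := by
  refine Ideal.span_le.mpr ?_
  rintro _ ⟨i, x, hx, rfl⟩
  refine reM.mem_annihilator_of_forall_emb fun j m => ?_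
  have hxm : (⟨(x : R) • (m : M), hFM.smul_mem x.2 m.2⟩ : FM (i + j)) = 0 :=
    Subtype.ext (Module.mem_annihilator.mp hx m)
  rw [reM.emb_smul i j x m (hFM.smul_mem x.2 m.2), hxm, map_zero]

end GrModuleReal

end Ring

section CommRing

variable {R : Type} [CommRing R] {F : ℤ → AddSubgroup R}

theorem IsRingFiltration.prod_mem (hF : IsRingFiltration F) {ι : Type} (s : Finset ι)
    {d : ι → ℤ} {v : ι → R} (hv : ∀ l ∈ s, v l ∈ F (d l)) :
    ∏ l ∈ s, v l ∈ F (∑ l ∈ s, d l) := by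
  classical
  induction s using Finset.induction_on with
  | empty => simpa using hF.one_mem
  | insert a s ha ih =>
    rw [Finset.prod_insert ha, Finset.sum_insert ha]
    exact hF.mul_mem (hv a (s.mem_insert_self a))
      (ih fun l hl => hv l (Finset.mem_insert_of_mem hl))

theorem GrRingReal.symbol_prod {A : Type} [CommRing A] (re : GrRingReal F A)
    (hF : IsRingFiltration F) {ι : Type} (s : Finset ι) {d : ι → ℤ} {v : ι → R}
    (hv : ∀ l ∈ s, v l ∈ F (d l)) :
    re.symbol (∑ l ∈ s, d l) (∏ l ∈ s, v l) = ∏ l ∈ s, re.symbol (d l) (v l) := by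
  classical
  induction s using Finset.induction_on with
  | empty => simpa using re.symbol_one hF
  | insert a s ha ih =>
    have hs : ∀ l ∈ s, v l ∈ F (d l) := fun l hl => hv l (Finset.mem_insert_of_mem hl)
    rw [Finset.prod_insert ha, Finset.sum_insert ha, Finset.prod_insert ha,
      re.symbol_mul hF (hv a (s.mem_insert_self a)) (hF.prod_mem s hs), ih hs]

theorem prod_mem_annihilator_of_smul_eq_zero {M : Type} [AddCommGroup M] [Module R M]
    {ι : Type} [Fintype ι] {g : ι → M} (hg : Submodule.span R (Set.range g) = ⊤) {a : ι → R}
    (ha : ∀ l, a l • g l = 0) : ∏ l, a l ∈ Module.annihilator R M := by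
  classical
  rw [← Submodule.annihilator_top, ← hg, Submodule.span_range_eq_iSup,
    Submodule.annihilator_iSup, Submodule.mem_iInf]
  intro l
  rw [Submodule.mem_annihilator_span_singleton, ← Finset.mul_prod_erase _ _ (Finset.mem_univ l),
    mul_comm, mul_smul, ha, smul_zero]

variable {M : Type} [AddCommGroup M] [Module R M] [Module.Finite R M]
  {FM : ℤ → AddSubgroup M} {A : Type} [CommRing A] (re : GrRingReal F A)

theorem symbol_mem_radical_grIdealOf_annihilator (hF : IsRingFiltration F)
    (hFM : IsModuleFiltration F FM) (hcyc : ∀ m : M, InducedGoodOn F FM (R ∙ m))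
    {d : ℤ} {x : R} (hxd : x ∈ F d) (hx : ∀ j, ∀ m ∈ FM j, x • m ∈ FM (j + (d - 1))) :
    re.symbol d x ∈ (grIdealOf re (Module.annihilator R M : Set R)).radical := by
  obtain ⟨t, g, hg⟩ := Module.Finite.exists_fin (R := R) (M := M)
  choose q hq using fun l => hFM.exhaustive (g l)
  choose c hc using fun l => (hcyc (g l)).exists_bound_span_singleton hF
  obtain ⟨N, hN⟩ := Finite.exists_le fun l => q l + c l
  set n := (N + 1).toNat
  have hy : ∀ l, ∃ y ∈ F (n * d - 1), y • g l = x ^ n • g l := by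
    intro l
    obtain ⟨y, hyF, hy⟩ := hc l _ _ (pow_smul_mem_of_forall_smul_mem hx n (hq l))
      (Submodule.smul_mem _ _ (Submodule.mem_span_singleton_self _))
    refine ⟨y, hF.monotone ?_ hyF, hy⟩
    have : N + 1 ≤ (n : ℤ) := Int.self_le_toNat _
    linarith [hN l]
  choose y hyF hy using hy
  have hxn : x ^ n ∈ F (n * d) := hF.pow_mem hxd n
  have hz : ∏ l, (x ^ n - y l) ∈ Module.annihilator R M :=
    prod_mem_annihilator_of_smul_eq_zero hg fun l => by rw [sub_smul, hy, sub_self]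
  have hpow : re.symbol d x ^ (n * t) =
      re.symbol (∑ _l : Fin t, (n * d : ℤ)) (∏ l, (x ^ n - y l)) := calc
    re.symbol d x ^ (n * t)
      = ∏ _l : Fin t, re.symbol (n * d) (x ^ n) := by
        rw [pow_mul, ← re.symbol_pow hF hxd, Finset.prod_const, Finset.card_fin]
    _ = ∏ l, re.symbol (n * d) (x ^ n - y l) := by
        simp only [re.symbol_sub_of_mem_pred hF hxn (hyF _)]
    _ = re.symbol (∑ _l : Fin t, (n * d : ℤ)) (∏ l, (x ^ n - y l)) :=
        (re.symbol_prod hF _ fun l _ => sub_mem hxn (hF.monotone (by omega) (hyF l))).symm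
  exact ⟨n * t, hpow ▸ re.symbol_mem_grIdealOf hz _⟩

theorem annihilator_le_radical_grIdealOf (hF : IsRingFiltration F)
    (hFM : IsModuleFiltration F FM) (hcyc : ∀ m : M, InducedGoodOn F FM (R ∙ m))
    {G : Type} [AddCommGroup G] [Module A G] (reM : GrModuleReal F FM re G) :
    Module.annihilator A G ≤ (grIdealOf re (Module.annihilator R M : Set R)).radical := by
  intro a ha
  obtain ⟨s, f, hf, rfl⟩ := re.internal.exists_finsetSum_eq a
  choose x hx using hf
  simp only [← hx] at ha ⊢
  refine Ideal.sum_mem _ fun i hi => ?_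
  rw [← re.symbol_coe]
  refine symbol_mem_radical_grIdealOf_annihilator re hF hFM hcyc (x i).2 fun j m hm => ?_
  rw [show j + (i - 1) = i + j - 1 by ring]
  exact reM.smul_mem_pred_of_sum_mem_annihilator hFM ha hi hm

end CommRing

end FilteredPaper

open FilteredPaper in
theorem statement_9_general (R : Type) [CommRing R] (F : ℤ → AddSubgroup R)
    (hF : IsRingFiltration F)
    (M : Type) [AddCommGroup M] [Module R M] [Module.Finite R M]
    (FM : ℤ → AddSubgroup M) (hFM : IsModuleFiltration F FM)
    (hMsub : ∀ N : Submodule R M, InducedGoodOn F FM N)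
    (A : Type) [CommRing A] (re : GrRingReal F A)
    (G : Type) [AddCommGroup G] [Module A G] (reM : GrModuleReal F FM re G) :
    (grIdealOf re (Module.annihilator R M : Set R)).radical =
      (Module.annihilator A G).radical :=
  le_antisymm (Ideal.radical_mono (reM.grIdealOf_annihilator_le hFM))
    (Ideal.radical_le_radical_iff.mpr
      (annihilator_le_radical_grIdealOf re hF hFM (fun _ => hMsub _) reM))

open FilteredPaper in
/-- let `R` be commutative with a filtration `𝓡` inducing good filtrations
on all submodules and quotients of `R`, and let `M` be finitely generated with an
`𝓡`-filtration `𝓜` inducing good filtrations on all submodules and quotients of `M`.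
Then `√(Gr(0:𝓜)) = √(0 : Gr𝓜)` as ideals of `Gr𝓡` (realizations `A` of `Gr𝓡` and `G`
of `Gr𝓜`). -/
theorem statement_9 (R : Type) [CommRing R] (F : ℤ → AddSubgroup R)
    (hF : IsRingFiltration F)
    (hRsub : ∀ I : Ideal R, InducedGoodOn F F I)
    (hRquot : ∀ I : Ideal R, IsGoodFiltration F (quotFil F I))
    (M : Type) [AddCommGroup M] [Module R M] [Module.Finite R M]
    (FM : ℤ → AddSubgroup M) (hFM : IsModuleFiltration F FM)
    (hMsub : ∀ N : Submodule R M, InducedGoodOn F FM N)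
    (hMquot : ∀ N : Submodule R M, IsGoodFiltration F (quotFil FM N))
    (A : Type) [CommRing A] (re : GrRingReal F A)
    (G : Type) [AddCommGroup G] [Module A G] (reM : GrModuleReal F FM re G) :
    (grIdealOf re (Module.annihilator R M : Set R)).radical =
      (Module.annihilator A G).radical :=
  statement_9_general R F hF M FM hFM hMsub A re G reM
end

section
/- Let R be a commutative ring, 𝓡 a filtration of R, and I an ideal of R. Provide I with its induced 𝓡-filtration 𝓘 and √I with its induced 𝓡-filtration √𝓘. Then √(Gr√𝓘) = √(Gr𝓘) as ideals of the commutative ring Gr𝓡. -/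
section Aux
open FilteredPaper
variable {R : Type} [Ring R] {F : ℤ → AddSubgroup R} {A : Type} [Ring A]

lemma emb_congr (re : GrRingReal F A) {i j : ℤ} (h : i = j) (x : F i) (y : F j)
    (hxy : (x : R) = y) : re.emb i x = re.emb j y := by
  subst h; congr 1; exact Subtype.ext hxy

lemma pow_mem_F (hF : IsRingFiltration F) {i : ℤ} {x : R} (hx : x ∈ F i) :
    ∀ n : ℕ, x ^ (n + 1) ∈ F ((n + 1 : ℕ) * i) := by
  intro n
  induction n with
  | zero => simpa using hx
  | succ n ih =>
      have h : x ^ (n + 1) * x ∈ F ((n + 1 : ℕ) * i + i) := hF.mul_mem ih hx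
      rw [pow_succ]
      have he : ((n + 1 : ℕ) : ℤ) * i + i = ((n + 2 : ℕ) : ℤ) * i := by push_cast; ring
      rwa [he] at h

lemma emb_pow (re : GrRingReal F A) (hF : IsRingFiltration F) {i : ℤ} (x : F i) (n : ℕ) :
    (re.emb i x) ^ (n + 1) =
      re.emb ((n + 1 : ℕ) * i) ⟨(x : R) ^ (n + 1), pow_mem_F hF x.2 n⟩ := by
  induction n with
  | zero =>
      rw [pow_one]
      exact emb_congr re (by push_cast; ring) _ _ (by simp)
  | succ n ih =>
      rw [pow_succ, ih]
      have hmul : ((x : R) ^ (n + 1)) * (x : R) ∈ F ((n + 1 : ℕ) * i + i) :=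
        hF.mul_mem (pow_mem_F hF x.2 n) x.2
      rw [re.emb_mul _ _ _ _ hmul]
      exact emb_congr re (by push_cast; ring) _ _ (by simp [pow_succ])

end Aux

open FilteredPaper in
/-- for a filtered commutative ring `(R,𝓡)` and an ideal `I ⊆ R`, with
`I` and `√I` carrying the induced filtrations, `√(Gr√𝓘) = √(Gr𝓘)` as ideals of `Gr𝓡`
(given by any realization `A`). -/
theorem statement_10 (R : Type) [CommRing R] (F : ℤ → AddSubgroup R)
    (hF : IsRingFiltration F) (I : Ideal R)
    (A : Type) [CommRing A] (re : GrRingReal F A) :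
    (grIdealOf re ((I.radical : Ideal R) : Set R)).radical =
      (grIdealOf re (I : Set R)).radical := by
  apply le_antisymm
  · apply Ideal.radical_le_radical_iff.mpr
    apply Ideal.span_le.mpr
    rintro a ⟨i, x, hxI, rfl⟩
    obtain ⟨n, hn⟩ := hxI
    have hx1 : (x : R) ^ (n + 1) ∈ I := by
      rw [pow_succ]
      exact I.mul_mem_right _ hn
    show re.emb i x ∈ (grIdealOf re (I : Set R)).radical
    rw [Ideal.mem_radical_iff]
    refine ⟨n + 1, ?_⟩
    rw [emb_pow re hF x n]
    exact Ideal.subset_span ⟨_, _, hx1, rfl⟩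
  · exact Ideal.radical_mono (Ideal.span_mono (by
      rintro a ⟨i, x, hxI, rfl⟩
      exact ⟨i, x, I.le_radical hxI, rfl⟩))
end

section
/- Let (R,𝓡) be a filtered ring, (M,𝓜) a filtered left R-module whose filtration 𝓜 is discrete (i.e. F_i𝓜 = 0 for all sufficiently small i), and N a left R-submodule of M with the induced filtration 𝓝. If N ⊊ M, then Gr𝓝 ⊊ Gr𝓜 as graded left Gr𝓡-submodules. -/
theorem DirectSum.IsInternal.mem_of_mem_iSup_of_le {ι G : Type*} [DecidableEq ι]
    [AddCommGroup G] {ℬ K : ι → AddSubgroup G} (hℬ : DirectSum.IsInternal ℬ)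
    (hK : ∀ j, K j ≤ ℬ j) {i : ι} {g : G} (hgi : g ∈ ℬ i) (hg : g ∈ ⨆ j, K j) :
    g ∈ K i := by
  let := hℬ.chooseDecomposition
  have component_mem : ∀ g ∈ ⨆ j, K j, (DirectSum.decompose ℬ g i : G) ∈ K i := by
    intro g hg
    refine AddSubgroup.iSup_induction K (C := fun g => (DirectSum.decompose ℬ g i : G) ∈ K i) hg
      (fun j k hk => ?_) (by simp)
      fun g g' hg hg' => by simpa using add_mem hg hg'
    by_cases hji : j = i
    · subst hji
      rwa [DirectSum.decompose_of_mem_same ℬ (hK j hk)]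
    · rw [DirectSum.decompose_of_mem_ne ℬ (hK j hk) hji]
      exact zero_mem _
  simpa [DirectSum.decompose_of_mem_same ℬ hgi] using component_mem g hg

namespace FilteredPaper

theorem exists_not_le_and_pred_le {M : Type*} [AddCommGroup M] {FM : ℤ → AddSubgroup M}
    (hexh : ∀ m, ∃ i, m ∈ FM i) {i₀ : ℤ} (hdisc : ∀ i ≤ i₀, FM i = ⊥)
    {N : AddSubgroup M} {m : M} (hm : m ∉ N) : ∃ i, ¬FM i ≤ N ∧ FM (i - 1) ≤ N := by
  have bdd : ∀ i, ¬FM i ≤ N → i₀ + 1 ≤ i := fun i hi =>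
    Int.add_one_le_of_lt <| lt_of_not_ge fun hle => hi (by simp [hdisc i hle])
  obtain ⟨j, hj⟩ := hexh m
  obtain ⟨i, hi, hleast⟩ := Int.exists_least_of_bdd ⟨i₀ + 1, bdd⟩ ⟨j, fun hle => hm (hle hj)⟩
  refine ⟨i, hi, ?_⟩
  by_contra hpred
  linarith [hleast _ hpred]

section Symbols

variable {R : Type} [Ring R] {F : ℤ → AddSubgroup R} {M : Type} [AddCommGroup M] [Module R M]
  {FM : ℤ → AddSubgroup M} {A : Type} [Ring A] {re : GrRingReal F A}
  {G : Type} [AddCommGroup G] [Module A G]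

def symbolSubgroup (reM : GrModuleReal F FM re G) (N : Submodule R M) : AddSubgroup G :=
  ⨆ j, (N.toAddSubgroup.addSubgroupOf (FM j)).map (reM.emb j)

theorem emb_mem_symbolSubgroup (reM : GrModuleReal F FM re G) {N : Submodule R M} {j : ℤ}
    {x : FM j} (hx : (x : M) ∈ N) : reM.emb j x ∈ symbolSubgroup reM N :=
  AddSubgroup.mem_iSup_of_mem j ⟨x, hx, rfl⟩

theorem smul_mem_symbolSubgroup (hFM : IsModuleFiltration F FM) (reM : GrModuleReal F FM re G)
    (N : Submodule R M) (a : A) {g : G} (hg : g ∈ symbolSubgroup reM N) :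
    a • g ∈ symbolSubgroup reM N := by
  obtain ⟨s, rfl⟩ := re.internal.surjective a
  induction s using DirectSum.induction_on with
  | zero => simp
  | of k r =>
    obtain ⟨_, r, rfl⟩ := r
    rw [DirectSum.coeAddMonoidHom_of]
    refine AddSubgroup.iSup_induction _ (C := fun g => re.emb k r • g ∈ symbolSubgroup reM N) hg
      (fun j _ hm => ?_) (by simp)
      fun g g' hg hg' => by simpa [smul_add] using add_mem hg hg'
    obtain ⟨m, hmN, rfl⟩ := hm
    rw [reM.emb_smul k j r m (hFM.smul_mem r.2 m.2)]
    exact emb_mem_symbolSubgroup reM (N.smul_mem _ hmN)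
  | add s s' hs hs' => simpa [add_smul] using add_mem hs hs'

def symbolSubmodule (hFM : IsModuleFiltration F FM) (reM : GrModuleReal F FM re G)
    (N : Submodule R M) : Submodule A G where
  toAddSubmonoid := (symbolSubgroup reM N).toAddSubmonoid
  smul_mem' := smul_mem_symbolSubgroup hFM reM N

theorem span_symbols_le (hFM : IsModuleFiltration F FM) (reM : GrModuleReal F FM re G)
    (N : Submodule R M) :
    Submodule.span A {g : G | ∃ (i : ℤ) (x : FM i), (x : M) ∈ N ∧ reM.emb i x = g} ≤
      symbolSubmodule hFM reM N :=
  Submodule.span_le.mpr fun _ ⟨_, _, hx, hg⟩ => hg ▸ emb_mem_symbolSubgroup reM hx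

theorem mem_sup_of_emb_mem_symbolSubgroup (reM : GrModuleReal F FM re G) {N : Submodule R M}
    {i : ℤ} {x : FM i} (hx : reM.emb i x ∈ symbolSubgroup reM N) :
    (x : M) ∈ N.toAddSubgroup ⊔ FM (i - 1) := by
  obtain ⟨y, hyN, hy⟩ := reM.internal.mem_of_mem_iSup_of_le
    (fun j => AddSubgroup.map_le_range _ _) ⟨x, rfl⟩ hx
  have hxy : ((x - y : FM i) : M) ∈ FM (i - 1) := by
    rw [← reM.emb_eq_zero_iff, map_sub, hy, sub_self]
  simpa using
    add_mem (AddSubgroup.mem_sup_left (T := FM (i - 1)) hyN) (AddSubgroup.mem_sup_right hxy)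

end Symbols

end FilteredPaper

open FilteredPaper in
theorem statement_11_general (R : Type) [Ring R] (F : ℤ → AddSubgroup R)
    (M : Type) [AddCommGroup M] [Module R M]
    (FM : ℤ → AddSubgroup M) (hFM : IsModuleFiltration F FM)
    (hdisc : ∃ i₀ : ℤ, ∀ i ≤ i₀, FM i = ⊥)
    (N : Submodule R M) (hN : N < ⊤)
    (A : Type) [Ring A] (re : GrRingReal F A)
    (G : Type) [AddCommGroup G] [Module A G] (reM : GrModuleReal F FM re G) :
    Submodule.span A
        {g : G | ∃ (i : ℤ) (x : FM i), (x : M) ∈ N ∧ reM.emb i x = g} <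
      (⊤ : Submodule A G) := by
  obtain ⟨i₀, hi₀⟩ := hdisc
  obtain ⟨m, -, hm⟩ := SetLike.exists_of_lt hN
  obtain ⟨i, hi, hpred⟩ :=
    exists_not_le_and_pred_le hFM.exhaustive hi₀ (N := N.toAddSubgroup) hm
  obtain ⟨x, hx, hxN⟩ := SetLike.not_le_iff_exists.mp hi
  refine lt_top_iff_ne_top.mpr fun htop => hxN ?_
  have hsymbol : reM.emb i ⟨x, hx⟩ ∈ symbolSubgroup reM N :=
    span_symbols_le hFM reM N (htop ▸ Submodule.mem_top)
  exact sup_le le_rfl hpred (mem_sup_of_emb_mem_symbolSubgroup reM hsymbol)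

open FilteredPaper in
/-- strict monotony of `Gr` for discrete filtrations: if the module
filtration `𝓜` is discrete and `N ⊊ M`, then `Gr𝓝 ⊊ Gr𝓜` (i.e. the graded submodule
of (a realization `G` of) `Gr𝓜` spanned by the symbols of elements of `N` is proper). -/
theorem statement_11 (R : Type) [Ring R] (F : ℤ → AddSubgroup R)
    (hF : IsRingFiltration F)
    (M : Type) [AddCommGroup M] [Module R M]
    (FM : ℤ → AddSubgroup M) (hFM : IsModuleFiltration F FM)
    (hdisc : ∃ i₀ : ℤ, ∀ i ≤ i₀, FM i = ⊥)
    (N : Submodule R M) (hN : N < ⊤)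
    (A : Type) [Ring A] (re : GrRingReal F A)
    (G : Type) [AddCommGroup G] [Module A G] (reM : GrModuleReal F FM re G) :
    Submodule.span A
        {g : G | ∃ (i : ℤ) (x : FM i), (x : M) ∈ N ∧ reM.emb i x = g} <
      (⊤ : Submodule A G) :=
  statement_11_general R F M FM hFM hdisc N hN A re G reM
end

section
/- Let (R,𝓡) be a filtered ring whose filtration 𝓡 is commutative, i.e. rs − sr ∈ F_{i+j−1}𝓡 whenever r ∈ F_i𝓡 and s ∈ F_j𝓡 (so that Gr𝓡 is a commutative ring). Let I be a left ideal of R, with induced filtration 𝓘 on I and induced filtration 𝓡/𝓘 on R/I. Then (0 : Gr(𝓡/𝓘)) = Gr𝓘 = Σ_{x∈I} Gr𝓡·σ^𝓡(x) as ideals of Gr𝓡. -/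
/-! The symbol `e = σ₀(1 + I)` generates `Gr(𝓡/𝓘)`: every homogeneous element is `σⱼ(y) • e`.
A symbol `σᵢ(x)` kills `e` exactly when `x ∈ I + Fᵢ₋₁`, i.e. when `σᵢ(x)` is the symbol of an
element of `I`. As `Gr𝓡` is commutative, killing `e` is the same as killing all of `Gr(𝓡/𝓘)`.
Conversely an annihilator kills `e` degree by degree, because `σᵢ(x) • e` has degree `i`. -/

namespace DirectSum.IsInternal

variable {ι G : Type*} [DecidableEq ι] [AddCommGroup G] {ℳ : ι → AddSubgroup G}

theorem exists_finsetSum_eq_s18 (h : IsInternal ℳ) (g : G) :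
    ∃ (s : Finset ι) (v : ι → G), (∀ i ∈ s, v i ∈ ℳ i) ∧ ∑ i ∈ s, v i = g := by
  classical
  obtain ⟨c, rfl⟩ := h.surjective g
  exact ⟨c.support, fun i => c i, fun i _ => (c i).2, (coeAddMonoidHom_eq_dfinsuppSum ℳ c).symm⟩

theorem eq_zero_of_finsetSum_eq_zero (h : IsInternal ℳ) {s : Finset ι} {v : ι → G}
    (hv : ∀ i ∈ s, v i ∈ ℳ i) (hsum : ∑ i ∈ s, v i = 0) : ∀ i ∈ s, v i = 0 :=
  (iSupIndep_iff_finsetSum_eq_zero_imp_eq_zero fun i => (ℳ i).toIntSubmodule).mp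
    ((iSupIndep_map_orderIso_iff AddSubgroup.toIntSubmodule).mpr h.addSubgroup_iSupIndep)
    s v hv hsum

end DirectSum.IsInternal

namespace FilteredPaper

variable {R : Type} [Ring R] {F : ℤ → AddSubgroup R} {A : Type} [Ring A]

namespace GrRingReal

variable (re : GrRingReal F A)

theorem emb_congr {i i' : ℤ} (h : i = i') {x : F i} {x' : F i'} (hx : (x : R) = x') :
    re.emb i x = re.emb i' x' := by
  subst h; rw [Subtype.ext hx]

theorem emb_eq_of_sub_mem {i : ℤ} {x x' : F i} (h : (x : R) - x' ∈ F (i - 1)) :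
    re.emb i x = re.emb i x' := by
  rw [← sub_eq_zero, ← map_sub, re.emb_eq_zero_iff]
  exact h

theorem emb_mul_comm (hF : IsRingFiltration F)
    (hcomm : ∀ (i j : ℤ) (r s : R), r ∈ F i → s ∈ F j → r * s - s * r ∈ F (i + j - 1))
    {i j : ℤ} (x : F i) (y : F j) : re.emb i x * re.emb j y = re.emb j y * re.emb i x := by
  rw [re.emb_mul i j x y (hF.mul_mem x.2 y.2), re.emb_mul j i y x (hF.mul_mem y.2 x.2),
    re.emb_congr (add_comm j i) (x' := ⟨(y : R) * x, add_comm j i ▸ hF.mul_mem y.2 x.2⟩) rfl]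
  exact re.emb_eq_of_sub_mem (hcomm i j x y x.2 y.2)

end GrRingReal

theorem grIdealOf_eq_span_emb_of_notMem (re : GrRingReal F A) (S : Set R) :
    grIdealOf re S =
      Ideal.span {a : A | ∃ (i : ℤ) (x : F i), (x : R) ∈ S ∧ (x : R) ∉ F (i - 1) ∧
        re.emb i x = a} := by
  apply le_antisymm
  · rw [grIdealOf, Ideal.span_le]
    rintro a ⟨i, x, hxS, rfl⟩
    by_cases hlow : (x : R) ∈ F (i - 1)
    · rw [SetLike.mem_coe, (re.emb_eq_zero_iff i x).mpr hlow]
      exact Ideal.zero_mem _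
    · exact Ideal.subset_span ⟨i, x, hxS, hlow, rfl⟩
  · rw [Ideal.span_le]
    rintro a ⟨i, x, hxS, -, rfl⟩
    exact Ideal.subset_span ⟨i, x, hxS, rfl⟩

section Quotient

variable {M : Type} [AddCommGroup M] [Module R M] {FM : ℤ → AddSubgroup M} {N : Submodule R M}

theorem mk_mem_quotFil {j : ℤ} {m : M} (hm : m ∈ FM j) :
    (Submodule.Quotient.mk m : M ⧸ N) ∈ quotFil FM N j :=
  AddSubgroup.mem_map_of_mem _ hm

theorem exists_mk_eq_of_mem_quotFil {j : ℤ} {m : M ⧸ N} (hm : m ∈ quotFil FM N j) :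
    ∃ y : FM j, Submodule.Quotient.mk (y : M) = m := by
  obtain ⟨y, hy, rfl⟩ := AddSubgroup.mem_map.mp hm
  exact ⟨⟨y, hy⟩, rfl⟩

end Quotient

namespace GrModuleReal

theorem emb_congr {M : Type} [AddCommGroup M] [Module R M] {FM : ℤ → AddSubgroup M}
    {re : GrRingReal F A} {G : Type} [AddCommGroup G] [Module A G]
    (reM : GrModuleReal F FM re G) {i i' : ℤ} (h : i = i') {x : FM i} {x' : FM i'}
    (hx : (x : M) = x') : reM.emb i x = reM.emb i' x' := by
  subst h; rw [Subtype.ext hx]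

variable {re : GrRingReal F A} {I : Ideal R} {G : Type} [AddCommGroup G] [Module A G]

section SymbolOne

variable (reM : GrModuleReal F (quotFil F I) re G) (hF : IsRingFiltration F)

def symbolOne : G :=
  reM.emb 0 ⟨Submodule.Quotient.mk 1, mk_mem_quotFil hF.one_mem⟩

theorem emb_smul_symbolOne {j : ℤ} (y : F j) :
    re.emb j y • reM.symbolOne hF =
      reM.emb j ⟨Submodule.Quotient.mk (y : R), mk_mem_quotFil y.2⟩ := by
  have hy : (y : R) • (Submodule.Quotient.mk 1 : R ⧸ I) = Submodule.Quotient.mk (y : R) := by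
    rw [← Submodule.Quotient.mk_smul, smul_eq_mul, mul_one]
  have hmem : (y : R) • (Submodule.Quotient.mk 1 : R ⧸ I) ∈ quotFil F I (j + 0) := by
    rw [hy, add_zero]
    exact mk_mem_quotFil y.2
  rw [symbolOne, reM.emb_smul j 0 y _ hmem]
  exact reM.emb_congr (add_zero j) hy

theorem exists_emb_smul_symbolOne_eq {j : ℤ} (m : quotFil F I j) :
    ∃ y : F j, re.emb j y • reM.symbolOne hF = reM.emb j m := by
  obtain ⟨y, hy⟩ := exists_mk_eq_of_mem_quotFil m.2
  exact ⟨y, (reM.emb_smul_symbolOne hF y).trans (reM.emb_congr rfl hy)⟩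

theorem emb_smul_symbolOne_eq_zero {i : ℤ} (x : F i) (hx : (x : R) ∈ I) :
    re.emb i x • reM.symbolOne hF = 0 := by
  rw [emb_smul_symbolOne, reM.emb_eq_zero_iff]
  change Submodule.Quotient.mk (x : R) ∈ quotFil F I (i - 1)
  rw [(Submodule.Quotient.mk_eq_zero I).mpr hx]
  exact zero_mem _

theorem emb_mem_grIdealOf_of_smul_symbolOne_eq_zero {i : ℤ} (x : F i)
    (hx : re.emb i x • reM.symbolOne hF = 0) : re.emb i x ∈ grIdealOf re (I : Set R) := by
  rw [emb_smul_symbolOne, reM.emb_eq_zero_iff] at hx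
  obtain ⟨y, hyx⟩ := exists_mk_eq_of_mem_quotFil hx
  have hxyI : (x : R) - y ∈ I := (Submodule.Quotient.eq I).mp hyx.symm
  have hxyF : (x : R) - y ∈ F i := sub_mem x.2 (hF.mono i y.2)
  rw [re.emb_eq_of_sub_mem (x' := ⟨_, hxyF⟩) (by simpa only [sub_sub_cancel] using y.2)]
  exact Ideal.subset_span ⟨i, _, hxyI, rfl⟩

end SymbolOne

theorem grIdealOf_le_annihilator (reM : GrModuleReal F (quotFil F I) re G)
    (hF : IsRingFiltration F)
    (hcomm : ∀ (i j : ℤ) (r s : R), r ∈ F i → s ∈ F j → r * s - s * r ∈ F (i + j - 1)) :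
    grIdealOf re (I : Set R) ≤ Module.annihilator A G := by
  rw [grIdealOf, Ideal.span_le]
  rintro a ⟨i, x, hxI, rfl⟩
  rw [SetLike.mem_coe, Module.mem_annihilator]
  intro g
  obtain ⟨s, v, hv, rfl⟩ := reM.internal.exists_finsetSum_eq_s18 g
  rw [Finset.smul_sum]
  refine Finset.sum_eq_zero fun j hj => ?_
  obtain ⟨m, hm⟩ := hv j hj
  obtain ⟨y, hy⟩ := reM.exists_emb_smul_symbolOne_eq hF m
  rw [← hm, ← hy, smul_smul, re.emb_mul_comm hF hcomm, mul_smul,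
    reM.emb_smul_symbolOne_eq_zero hF x hxI, smul_zero]

theorem annihilator_le_grIdealOf (reM : GrModuleReal F (quotFil F I) re G)
    (hF : IsRingFiltration F) : Module.annihilator A G ≤ grIdealOf re (I : Set R) := by
  intro a ha
  obtain ⟨s, v, hv, rfl⟩ := re.internal.exists_finsetSum_eq_s18 a
  have hdeg : ∀ i ∈ s, v i • reM.symbolOne hF ∈ (reM.emb i).range := by
    intro i hi
    obtain ⟨x, hx⟩ := hv i hi
    exact ⟨_, hx ▸ (reM.emb_smul_symbolOne hF x).symm⟩
  have hzero := reM.internal.eq_zero_of_finsetSum_eq_zero hdeg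
    (by rw [← Finset.sum_smul]; exact Module.mem_annihilator.mp ha _)
  refine Ideal.sum_mem _ fun i hi => ?_
  obtain ⟨x, hx⟩ := hv i hi
  rw [← hx]
  exact reM.emb_mem_grIdealOf_of_smul_symbolOne_eq_zero hF x (hx ▸ hzero i hi)

end GrModuleReal

end FilteredPaper

open FilteredPaper in
/-- for a filtered ring `(R,𝓡)` with commutative filtration (so that
`Gr𝓡` is commutative) and a left ideal `I ⊆ R`,
`(0 : Gr(𝓡/𝓘)) = Gr𝓘 = Σ_{x ∈ I} Gr𝓡·σ(x)` as ideals of `Gr𝓡` (realizations `A` of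
`Gr𝓡` and `G` of `Gr(𝓡/𝓘)`, `R/I` carrying the induced filtration). -/
theorem statement_18 (R : Type) [Ring R] (F : ℤ → AddSubgroup R)
    (hF : IsRingFiltration F)
    (hcomm : ∀ (i j : ℤ) (r s : R), r ∈ F i → s ∈ F j → r * s - s * r ∈ F (i + j - 1))
    (I : Ideal R)
    (A : Type) [Ring A] (re : GrRingReal F A)
    (G : Type) [AddCommGroup G] [Module A G]
    (reM : GrModuleReal F (quotFil F I) re G) :
    Module.annihilator A G = grIdealOf re (I : Set R) ∧
    grIdealOf re (I : Set R) =
      Ideal.span {a : A | ∃ (i : ℤ) (x : F i),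
        (x : R) ∈ I ∧ (x : R) ∉ F (i - 1) ∧ re.emb i x = a} :=
  ⟨le_antisymm (reM.annihilator_le_grIdealOf hF) (reM.grIdealOf_le_annihilator hF hcomm),
    grIdealOf_eq_span_emb_of_notMem re _⟩
end
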